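/- arXiv:2108.12713 — 2 statements merged into one kernel-verified Lean document; each statement's English description precedes it below -/
import Mathlib

section
/- Let p be a prime and let B = F_p[ξ_1, ξ_2, …] be the polynomial F_p-algebra on variables ξ_n (n ≥ 1), with ξ_0 = 1. Then: (1) there is a unique F_p-algebra homomorphism Δ : B → B ⊗_{F_p} B with Δ(ξ_n) = Σ_{k=0}^{n} ξ_{n−k}^{p^k} ⊗ ξ_k for all n ≥ 1; (2) Δ is coassociative and is counital for the F_p-algebra homomorphism ε : B → F_p with ε(ξ_n) = 0 for n ≥ 1; and (3) the bialgebra (B, Δ, ε) admits a (necessarily unique) antipode χ : B → B, i.e. an F_p-linear map with m ∘ (χ ⊗ id) ∘ Δ = η ∘ ε = m ∘ (id ⊗ χ) ∘ Δ, so that B is a commutative Hopf algebra over F_p. -/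
/-!
Since `B` is free on the `ξ_n`, the algebra maps `Δ` and `ε` exist and are unique, and every
identity between algebra maps out of `B` may be checked on generators. Coassociativity on `ξ_n`
is the Frobenius identity `Δ(ξ_j)^{p^k} = Σ_i ξ_{j-i}^{p^{i+k}} ⊗ ξ_i^{p^k}` followed by a
reindexing of a sum over `a + b + c = n`. The equations `Σ_k χ(ξ_{n-k})^{p^k} ξ_k = 0` and
`Σ_k ξ_{n-k}^{p^k} χ'(ξ_k) = 0` (`n ≥ 1`) can be solved recursively for `χ(ξ_n)`, resp.
`χ'(ξ_n)`; since `B` is commutative, the algebra maps `χ`, `χ'` so obtained are a left and a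
right inverse of the identity in the convolution monoid, hence equal, and the unique antipode.
-/

open TensorProduct

/-- `B = F_p[ξ_1, ξ_2, …]`, the polynomial algebra over `F_p` on countably many
variables; the variable `X (n-1)` of `MvPolynomial ℕ (ZMod p)` plays the role of `ξ_n`,
and `ξ_0 = 1`. -/
noncomputable def milnorXi (p : ℕ) (n : ℕ) : MvPolynomial ℕ (ZMod p) :=
  if n = 0 then 1 else MvPolynomial.X (n - 1)

/-- The value `Δ(ξ_n) = Σ_{k=0}^{n} ξ_{n−k}^{p^k} ⊗ ξ_k` of the Milnor coproduct on the
generator `ξ_n`. -/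
noncomputable def milnorCoprodVal (p n : ℕ) :
    MvPolynomial ℕ (ZMod p) ⊗[ZMod p] MvPolynomial ℕ (ZMod p) :=
  ∑ k ∈ Finset.range (n + 1),
    ((milnorXi p (n - k)) ^ (p ^ k)) ⊗ₜ[ZMod p] (milnorXi p k)

/-- Both sides sum `f a b c` over the triples with `a + b + c = N`. -/
theorem Finset.sum_range_sum_range_tsub {M : Type*} [AddCommMonoid M] (f : ℕ → ℕ → ℕ → M)
    (N : ℕ) :
    ∑ k ∈ range (N + 1), ∑ j ∈ range (N - k + 1), f (N - k - j) j k =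
      ∑ i ∈ range (N + 1), ∑ k ∈ range (i + 1), f (N - i) (i - k) k := by
  rw [sum_sigma', sum_sigma']
  refine sum_nbij' (fun x => ⟨x.1 + x.2, x.1⟩) (fun x => ⟨x.2, x.1 - x.2⟩) ?_ ?_ ?_ ?_ ?_ <;>
    rintro ⟨a, b⟩ h <;> simp only [mem_sigma, mem_range] at h ⊢
  · omega
  · omega
  · simp
  · simp [Nat.add_sub_of_le (Nat.le_of_lt_succ h.2)]
  · rw [Nat.sub_sub, Nat.add_sub_cancel_left]

open WithConv in
theorem existsUnique_antipode_of_left_of_right {R A : Type*} [CommSemiring R] [Semiring A]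
    [Algebra R A] (Δ : A →ₐ[R] A ⊗[R] A) (ε : A →ₐ[R] R)
    (h_coassoc : (Algebra.TensorProduct.assoc R R R A A A).toAlgHom.comp
      ((Algebra.TensorProduct.map Δ (.id R A)).comp Δ) =
        (Algebra.TensorProduct.map (.id R A) Δ).comp Δ)
    (h_rTensor : (Algebra.TensorProduct.map ε (.id R A)).comp Δ =
      (Algebra.TensorProduct.lid R A).symm)
    (h_lTensor : (Algebra.TensorProduct.map (.id R A) ε).comp Δ =
      (Algebra.TensorProduct.rid R R A).symm)
    {χL χR : A →ₗ[R] A}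
    (hL : LinearMap.mul' R A ∘ₗ map χL .id ∘ₗ Δ.toLinearMap =
      Algebra.linearMap R A ∘ₗ ε.toLinearMap)
    (hR : LinearMap.mul' R A ∘ₗ map .id χR ∘ₗ Δ.toLinearMap =
      Algebra.linearMap R A ∘ₗ ε.toLinearMap) :
    ∃! χ : A →ₗ[R] A, ∀ x,
      LinearMap.mul' R A (map χ .id (Δ x)) = algebraMap R A (ε x) ∧
      LinearMap.mul' R A (map .id χ (Δ x)) = algebraMap R A (ε x) := by
  let := Bialgebra.ofAlgHom Δ ε h_coassoc h_rTensor h_lTensor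
  have hR' : toConv .id * toConv χR = 1 := congrArg toConv hR
  have eq_χR {χ : A →ₗ[R] A} (h : LinearMap.mul' R A ∘ₗ map χ .id ∘ₗ Δ.toLinearMap =
      Algebra.linearMap R A ∘ₗ ε.toLinearMap) : χ = χR :=
    toConv_injective <| left_inv_eq_right_inv (congrArg toConv h) hR'
  obtain rfl := eq_χR hL
  exact ⟨χL, fun x => ⟨LinearMap.congr_fun hL x, LinearMap.congr_fun hR x⟩,
    fun χ hχ => eq_χR (LinearMap.ext fun x => (hχ x).1)⟩

section Milnor

open MvPolynomial Finset

noncomputable def milnorCoprod (p : ℕ) :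
    MvPolynomial ℕ (ZMod p) →ₐ[ZMod p]
      MvPolynomial ℕ (ZMod p) ⊗[ZMod p] MvPolynomial ℕ (ZMod p) :=
  aeval fun n => milnorCoprodVal p (n + 1)

noncomputable def milnorCounit (p : ℕ) : MvPolynomial ℕ (ZMod p) →ₐ[ZMod p] ZMod p :=
  aeval 0

noncomputable def milnorLeftAntipodeVal (p : ℕ) : ℕ → MvPolynomial ℕ (ZMod p)
  | 0 => 1
  | n + 1 => -∑ k ∈ range (n + 1),
      milnorLeftAntipodeVal p (n - k) ^ p ^ (k + 1) * milnorXi p (k + 1)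
decreasing_by omega

noncomputable def milnorRightAntipodeVal (p : ℕ) : ℕ → MvPolynomial ℕ (ZMod p)
  | 0 => 1
  | n + 1 => -∑ k : Fin (n + 1),
      milnorXi p (n + 1 - k) ^ p ^ (k : ℕ) * milnorRightAntipodeVal p k

noncomputable def milnorLeftAntipode (p : ℕ) :
    MvPolynomial ℕ (ZMod p) →ₐ[ZMod p] MvPolynomial ℕ (ZMod p) :=
  aeval fun n => milnorLeftAntipodeVal p (n + 1)

noncomputable def milnorRightAntipode (p : ℕ) :
    MvPolynomial ℕ (ZMod p) →ₐ[ZMod p] MvPolynomial ℕ (ZMod p) :=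
  aeval fun n => milnorRightAntipodeVal p (n + 1)

variable {p : ℕ}

local notation "B" => MvPolynomial ℕ (ZMod p)

theorem milnorXi_zero : milnorXi p 0 = 1 := rfl

theorem algHom_ext_milnorXi {S : Type*} [Semiring S] [Algebra (ZMod p) S] {f g : B →ₐ[ZMod p] S}
    (h : ∀ n, 1 ≤ n → f (milnorXi p n) = g (milnorXi p n)) : f = g :=
  algHom_ext fun n => h (n + 1) n.succ_pos

theorem existsUnique_algHom_milnorXi {S : Type*} [CommSemiring S] [Algebra (ZMod p) S]
    (v : ℕ → S) : ∃! f : B →ₐ[ZMod p] S, ∀ n, 1 ≤ n → f (milnorXi p n) = v n := by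
  have hv : ∀ n, 1 ≤ n → aeval (fun n => v (n + 1)) (milnorXi p n) = v n := fun n hn => by
    obtain ⟨m, rfl⟩ := Nat.exists_eq_add_of_le' hn
    exact aeval_X _ m
  exact ⟨_, hv, fun g hg => algHom_ext_milnorXi fun n hn => (hg n hn).trans (hv n hn).symm⟩

theorem milnorCoprodVal_zero : milnorCoprodVal p 0 = 1 := by
  simp [milnorCoprodVal, milnorXi_zero, Algebra.TensorProduct.one_def]

theorem milnorCoprod_milnorXi (n : ℕ) : milnorCoprod p (milnorXi p n) = milnorCoprodVal p n := by
  cases n with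
  | zero => rw [milnorXi_zero, map_one, milnorCoprodVal_zero]
  | succ n => exact aeval_X _ n

theorem milnorCounit_milnorXi (n : ℕ) :
    milnorCounit p (milnorXi p n) = if n = 0 then 1 else 0 := by
  cases n with
  | zero => rw [milnorXi_zero, map_one, if_pos rfl]
  | succ n => exact aeval_X _ n

theorem milnorLeftAntipode_milnorXi (n : ℕ) :
    milnorLeftAntipode p (milnorXi p n) = milnorLeftAntipodeVal p n := by
  cases n with
  | zero => rw [milnorXi_zero, map_one, milnorLeftAntipodeVal]
  | succ n => exact aeval_X _ n

theorem milnorRightAntipode_milnorXi (n : ℕ) :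
    milnorRightAntipode p (milnorXi p n) = milnorRightAntipodeVal p n := by
  cases n with
  | zero => rw [milnorXi_zero, map_one, milnorRightAntipodeVal]
  | succ n => exact aeval_X _ n

theorem milnorCounit_lTensor_comp_milnorCoprod :
    (Algebra.TensorProduct.map (.id _ _) (milnorCounit p)).comp (milnorCoprod p) =
      ((Algebra.TensorProduct.rid (ZMod p) (ZMod p) B).symm : B →ₐ[ZMod p] _) := by
  refine algHom_ext_milnorXi fun N _ => ?_
  rw [AlgHom.comp_apply, milnorCoprod_milnorXi, milnorCoprodVal, map_sum, sum_eq_single 0]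
  · simp [milnorCounit_milnorXi]
  · intro k _ hk
    rw [Algebra.TensorProduct.map_tmul, milnorCounit_milnorXi, if_neg hk, TensorProduct.tmul_zero]
  · exact fun h => absurd (mem_range.mpr N.succ_pos) h

theorem sum_milnorLeftAntipodeVal_pow_mul_milnorXi {N : ℕ} (hN : 1 ≤ N) :
    ∑ k ∈ range (N + 1), milnorLeftAntipodeVal p (N - k) ^ p ^ k * milnorXi p k = 0 := by
  obtain ⟨n, rfl⟩ := Nat.exists_eq_add_of_le' hN
  rw [sum_range_succ']
  simp [milnorLeftAntipodeVal, milnorXi_zero]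

theorem sum_milnorXi_pow_mul_milnorRightAntipodeVal {N : ℕ} (hN : 1 ≤ N) :
    ∑ k ∈ range (N + 1), milnorXi p (N - k) ^ p ^ k * milnorRightAntipodeVal p k = 0 := by
  obtain ⟨n, rfl⟩ := Nat.exists_eq_add_of_le' hN
  rw [sum_range_succ, milnorRightAntipodeVal, Fin.sum_univ_eq_sum_range
    (fun k => milnorXi p (n + 1 - k) ^ p ^ k * milnorRightAntipodeVal p k)]
  simp [milnorXi_zero]

theorem mul'_comp_map_milnorLeftAntipode_comp_milnorCoprod :
    LinearMap.mul' (ZMod p) B ∘ₗ map (milnorLeftAntipode p).toLinearMap .id ∘ₗ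
      (milnorCoprod p).toLinearMap =
    Algebra.linearMap (ZMod p) B ∘ₗ (milnorCounit p).toLinearMap := by
  have h : (Algebra.TensorProduct.lmul' (ZMod p)).comp
      ((Algebra.TensorProduct.map (milnorLeftAntipode p) (.id _ _)).comp (milnorCoprod p)) =
      (Algebra.ofId (ZMod p) B).comp (milnorCounit p) := by
    refine algHom_ext_milnorXi fun N hN => ?_
    simp only [AlgHom.comp_apply, milnorCoprod_milnorXi, milnorCoprodVal, map_sum,
      Algebra.TensorProduct.map_tmul, map_pow, milnorLeftAntipode_milnorXi, AlgHom.coe_id, id_eq,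
      Algebra.TensorProduct.lmul'_apply_tmul, milnorCounit_milnorXi, if_neg (by omega : N ≠ 0),
      map_zero]
    exact sum_milnorLeftAntipodeVal_pow_mul_milnorXi hN
  exact congr(($h).toLinearMap)

theorem mul'_comp_map_milnorRightAntipode_comp_milnorCoprod :
    LinearMap.mul' (ZMod p) B ∘ₗ map .id (milnorRightAntipode p).toLinearMap ∘ₗ
      (milnorCoprod p).toLinearMap =
    Algebra.linearMap (ZMod p) B ∘ₗ (milnorCounit p).toLinearMap := by
  have h : (Algebra.TensorProduct.lmul' (ZMod p)).comp
      ((Algebra.TensorProduct.map (.id _ _) (milnorRightAntipode p)).comp (milnorCoprod p)) =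
      (Algebra.ofId (ZMod p) B).comp (milnorCounit p) := by
    refine algHom_ext_milnorXi fun N hN => ?_
    simp only [AlgHom.comp_apply, milnorCoprod_milnorXi, milnorCoprodVal, map_sum,
      Algebra.TensorProduct.map_tmul, milnorRightAntipode_milnorXi, AlgHom.coe_id, id_eq,
      Algebra.TensorProduct.lmul'_apply_tmul, milnorCounit_milnorXi, if_neg (by omega : N ≠ 0),
      map_zero]
    exact sum_milnorXi_pow_mul_milnorRightAntipodeVal hN
  exact congr(($h).toLinearMap)

variable [Fact p.Prime]

theorem milnorCoprodVal_pow (N j : ℕ) :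
    milnorCoprodVal p N ^ p ^ j =
      ∑ k ∈ range (N + 1),
        (milnorXi p (N - k) ^ p ^ (k + j)) ⊗ₜ[ZMod p] (milnorXi p k ^ p ^ j) := by
  have : CharP (B ⊗[ZMod p] B) p := charP_of_injective_algebraMap' (ZMod p) p
  rw [milnorCoprodVal, sum_pow_char_pow]
  simp only [Algebra.TensorProduct.tmul_pow, ← pow_mul, ← pow_add]

theorem milnorCoprod_coassoc :
    (Algebra.TensorProduct.assoc (ZMod p) (ZMod p) (ZMod p) B B B).toAlgHom.comp
      ((Algebra.TensorProduct.map (milnorCoprod p) (.id _ _)).comp (milnorCoprod p)) =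
    (Algebra.TensorProduct.map (.id _ _) (milnorCoprod p)).comp (milnorCoprod p) := by
  refine algHom_ext_milnorXi fun N _ => ?_
  simp only [AlgHom.comp_apply, milnorCoprod_milnorXi]
  rw [milnorCoprodVal]
  simp only [map_sum, Algebra.TensorProduct.map_tmul, map_pow, milnorCoprod_milnorXi,
    milnorCoprodVal_pow, AlgHom.coe_id, id_eq, TensorProduct.sum_tmul, AlgEquiv.coe_toAlgHom,
    Algebra.TensorProduct.assoc_tmul]
  simp only [milnorCoprodVal, TensorProduct.tmul_sum]
  rw [sum_range_sum_range_tsub (fun a b c => (milnorXi p a ^ p ^ (b + c)) ⊗ₜ[ZMod p]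
    ((milnorXi p b ^ p ^ c) ⊗ₜ[ZMod p] milnorXi p c))]
  refine sum_congr rfl fun i _ => sum_congr rfl fun k hk => ?_
  rw [Nat.sub_add_cancel (Nat.le_of_lt_succ (mem_range.mp hk))]

theorem milnorCounit_rTensor_comp_milnorCoprod :
    (Algebra.TensorProduct.map (milnorCounit p) (.id _ _)).comp (milnorCoprod p) =
      ((Algebra.TensorProduct.lid (ZMod p) B).symm : B →ₐ[ZMod p] _) := by
  refine algHom_ext_milnorXi fun N _ => ?_
  rw [AlgHom.comp_apply, milnorCoprod_milnorXi, milnorCoprodVal, map_sum, sum_eq_single N]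
  · simp [milnorCounit_milnorXi]
  · intro k hk hkN
    have : N - k ≠ 0 := by have := mem_range.mp hk; omega
    rw [Algebra.TensorProduct.map_tmul, map_pow, milnorCounit_milnorXi, if_neg this,
      zero_pow (pow_ne_zero k (Fact.out : p.Prime).ne_zero), TensorProduct.zero_tmul]
  · exact fun h => absurd (self_mem_range_succ N) h

end Milnor

/-- Let `p` be a prime and `B = F_p[ξ_1, ξ_2, …]` (with `ξ_0 = 1`).  Then:
(1) there is a unique `F_p`-algebra homomorphism `Δ : B → B ⊗ B` with
`Δ(ξ_n) = Σ_{k=0}^{n} ξ_{n−k}^{p^k} ⊗ ξ_k` for all `n ≥ 1`, and a unique `F_p`-algebra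
homomorphism `ε : B → F_p` with `ε(ξ_n) = 0` for `n ≥ 1`;
(2) `Δ` is coassociative and counital for `ε`;
(3) the bialgebra `(B, Δ, ε)` admits a unique antipode `χ : B → B`, i.e. an `F_p`-linear
map with `m ∘ (χ ⊗ id) ∘ Δ = η ∘ ε = m ∘ (id ⊗ χ) ∘ Δ`; so `B` is a commutative Hopf
algebra over `F_p`. -/
theorem stmt_0 (p : ℕ) [Fact p.Prime] :
    (∃! Δ : MvPolynomial ℕ (ZMod p) →ₐ[ZMod p]
        (MvPolynomial ℕ (ZMod p) ⊗[ZMod p] MvPolynomial ℕ (ZMod p)),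
      ∀ n : ℕ, 1 ≤ n → Δ (milnorXi p n) = milnorCoprodVal p n) ∧
    (∃! ε : MvPolynomial ℕ (ZMod p) →ₐ[ZMod p] ZMod p,
      ∀ n : ℕ, 1 ≤ n → ε (milnorXi p n) = 0) ∧
    (∀ (Δ : MvPolynomial ℕ (ZMod p) →ₐ[ZMod p]
          (MvPolynomial ℕ (ZMod p) ⊗[ZMod p] MvPolynomial ℕ (ZMod p)))
        (ε : MvPolynomial ℕ (ZMod p) →ₐ[ZMod p] ZMod p),
      (∀ n : ℕ, 1 ≤ n → Δ (milnorXi p n) = milnorCoprodVal p n) →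
      (∀ n : ℕ, 1 ≤ n → ε (milnorXi p n) = 0) →
      -- coassociativity
      (∀ x : MvPolynomial ℕ (ZMod p),
        (Algebra.TensorProduct.assoc (ZMod p) (ZMod p) (ZMod p) (MvPolynomial ℕ (ZMod p))
            (MvPolynomial ℕ (ZMod p)) (MvPolynomial ℕ (ZMod p)))
          ((Algebra.TensorProduct.map Δ (AlgHom.id (ZMod p) (MvPolynomial ℕ (ZMod p))))
            (Δ x)) =
        (Algebra.TensorProduct.map (AlgHom.id (ZMod p) (MvPolynomial ℕ (ZMod p))) Δ)
          (Δ x)) ∧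
      -- counit laws
      (∀ x : MvPolynomial ℕ (ZMod p),
        (TensorProduct.lid (ZMod p) (MvPolynomial ℕ (ZMod p)))
          ((Algebra.TensorProduct.map ε (AlgHom.id (ZMod p) (MvPolynomial ℕ (ZMod p))))
            (Δ x)) = x) ∧
      (∀ x : MvPolynomial ℕ (ZMod p),
        (TensorProduct.rid (ZMod p) (MvPolynomial ℕ (ZMod p)))
          ((Algebra.TensorProduct.map (AlgHom.id (ZMod p) (MvPolynomial ℕ (ZMod p))) ε)
            (Δ x)) = x) ∧
      -- existence and uniqueness of the antipode
      (∃! χ : MvPolynomial ℕ (ZMod p) →ₗ[ZMod p] MvPolynomial ℕ (ZMod p),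
        ∀ x : MvPolynomial ℕ (ZMod p),
          (LinearMap.mul' (ZMod p) (MvPolynomial ℕ (ZMod p)))
              ((TensorProduct.map χ LinearMap.id) (Δ x)) =
            algebraMap (ZMod p) (MvPolynomial ℕ (ZMod p)) (ε x) ∧
          (LinearMap.mul' (ZMod p) (MvPolynomial ℕ (ZMod p)))
              ((TensorProduct.map LinearMap.id χ) (Δ x)) =
            algebraMap (ZMod p) (MvPolynomial ℕ (ZMod p)) (ε x))) := by
  have hΔ : ∀ n, 1 ≤ n → milnorCoprod p (milnorXi p n) = milnorCoprodVal p n :=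
    fun n _ => milnorCoprod_milnorXi n
  have hε : ∀ n, 1 ≤ n → milnorCounit p (milnorXi p n) = 0 :=
    fun n hn => by rw [milnorCounit_milnorXi, if_neg (by omega)]
  have existsUnique_Δ := existsUnique_algHom_milnorXi (p := p) (milnorCoprodVal p)
  have existsUnique_ε := existsUnique_algHom_milnorXi (p := p) fun _ => (0 : ZMod p)
  refine ⟨existsUnique_Δ, existsUnique_ε, fun Δ ε hΔ' hε' => ?_⟩
  obtain rfl := existsUnique_Δ.unique hΔ' hΔ
  obtain rfl := existsUnique_ε.unique hε' hε
  refine ⟨fun x => AlgHom.congr_fun milnorCoprod_coassoc x, fun x => ?_, fun x => ?_,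
    existsUnique_antipode_of_left_of_right _ _ milnorCoprod_coassoc
      milnorCounit_rTensor_comp_milnorCoprod milnorCounit_lTensor_comp_milnorCoprod
      mul'_comp_map_milnorLeftAntipode_comp_milnorCoprod
      mul'_comp_map_milnorRightAntipode_comp_milnorCoprod⟩
  · rw [← AlgHom.comp_apply, milnorCounit_rTensor_comp_milnorCoprod]
    exact (Algebra.TensorProduct.lid (ZMod p) _).apply_symm_apply x
  · rw [← AlgHom.comp_apply, milnorCounit_lTensor_comp_milnorCoprod]
    exact (Algebra.TensorProduct.rid (ZMod p) (ZMod p) _).apply_symm_apply x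
end

section
/- Suppose in addition that p is odd. Then for all integers t ≥ 1 and i with 1 ≤ i ≤ p^t − 1, the degree-2(p^t − i − 1) homogeneous component of ξ̄^{i−1} ∈ B̂ equals ξ_s if i = p^t − p^s for some integer s with 0 ≤ s ≤ t − 1 (where ξ_0 = 1), and equals 0 otherwise. -/
open TensorProduct

/-- The element `ξ̄` of the completion `B̂ = ∏_m B_{2m}` (modelled as a power series with
coefficients in `B`, the degree-`2m` component being the coefficient of `T^m`): its
degree-`2(p^n − 1)` component is `χ(ξ_n)` and all other components vanish. -/
noncomputable def xiBar (p : ℕ)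
    (χ : MvPolynomial ℕ (ZMod p) →ₗ[ZMod p] MvPolynomial ℕ (ZMod p)) :
    PowerSeries (MvPolynomial ℕ (ZMod p)) :=
  PowerSeries.mk fun m =>
    ∑ n ∈ Finset.range (m + 1), if p ^ n - 1 = m then χ (milnorXi p n) else 0

/-!
Put `w = ξ̄⁻¹` and `v = Σₙ ξₙ T^(pⁿ-1)`. Since `ξ̄^(p^t) ≡ 1 mod T^(p^t)`, the coefficient in
question is `[T^N] w^(N+2)` with `N = p^t - i - 1`, and the theorem is the case `e = 1` of the
Lagrange inversion formula `[T^M] w^(M+1+e) = [T^M] v^e`: the antipode relation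
`Σₖ ξ_{m-k}^(p^k) χ(ξₖ) = 0` says that `T ξ̄ = Σₙ χ(ξₙ) T^(pⁿ)` is the compositional inverse of
`T v`. We prove the formula for `e = 0` and `e = p^c` by induction on `M`, without residues.
In characteristic `p` the series `T ξ̄` has derivative `1`, so `T w' = w - w²`; this gives a
recursion between the coefficients of consecutive powers of `w`. When `p ∣ e` the recursion and
the Frobenius `[T^(pM)] g^p = ([T^M] g)^p` reduce `M` to `M / p`. When `e = 1` and `p ∣ M + 1` it
reduces `w^(M+2)` to `w^(M+p) = (w^((M+1)/p+1))^p ξ̄`, and multiplying by `ξ̄` brings in the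
antipode relation.
-/

namespace PowerSeries

variable {R : Type*} [CommRing R]

theorem coeff_X_mul_derivative (f : R⟦X⟧) (n : ℕ) :
    coeff n (X * d⁄dX R f) = n * coeff n f := by
  rcases n with _ | n
  · simp
  · rw [coeff_succ_X_mul, coeff_derivative]
    push_cast
    ring

variable {p : ℕ} [hp : Fact p.Prime] [CharP R p]

theorem coeff_pow_prime_pow (f : R⟦X⟧) (n k : ℕ) :
    coeff k (f ^ p ^ n) = if p ^ n ∣ k then coeff (k / p ^ n) f ^ p ^ n else 0 := by
  have h : map (iterateFrobenius R p n) (expand (p ^ n) (pow_ne_zero n hp.out.ne_zero) f) =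
      f ^ p ^ n := MvPowerSeries.map_iterateFrobenius_expand p hp.out.ne_zero f n
  rw [← h, coeff_map, coeff_expand]
  split_ifs
  · simp [iterateFrobenius_def]
  · exact zero_pow (pow_ne_zero n hp.out.ne_zero)

theorem coeff_pow_prime (f : R⟦X⟧) (k : ℕ) :
    coeff k (f ^ p) = if p ∣ k then coeff (k / p) f ^ p else 0 := by
  simpa using coeff_pow_prime_pow (p := p) f 1 k

theorem coeff_pow_prime_pow_mul {f : R⟦X⟧} (hf : constantCoeff f = 1) (g : R⟦X⟧) {n N : ℕ}
    (hN : N < p ^ n) : coeff N (f ^ p ^ n * g) = coeff N g := by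
  have : CharP R⟦X⟧ p := charP_of_injective_ringHom C_injective p
  have hX : X ^ p ^ n ∣ (f ^ p ^ n - 1) * g := by
    rw [← one_pow (p ^ n), ← sub_pow_char_pow]
    exact (pow_dvd_pow_of_dvd (X_dvd_iff.mpr (by simp [hf])) _).mul_right g
  have h := X_pow_dvd_iff.mp hX N hN
  rwa [sub_mul, one_mul, map_sub, sub_eq_zero] at h

theorem coeff_zpow_sub_eq_coeff_inv_pow {u : R⟦X⟧ˣ} (hu : constantCoeff (u : R⟦X⟧) = 1)
    {t N : ℕ} (hN : N < p ^ t) (m : ℕ) :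
    coeff N ((u ^ (((p ^ t : ℕ) : ℤ) - m) : R⟦X⟧ˣ) : R⟦X⟧) = coeff N ((↑u⁻¹ : R⟦X⟧) ^ m) := by
  rw [zpow_sub, zpow_natCast, zpow_natCast, Units.val_mul, Units.val_pow_eq_pow_val, ← inv_pow,
    Units.val_pow_eq_pow_val, coeff_pow_prime_pow_mul hu _ hN]

end PowerSeries

open PowerSeries

/- The hypothesis `X * f' = f - f ^ 2` says that `X / f` has derivative `1`; it holds for
`f = ξ̄⁻¹`. -/
section

variable {R : Type*} [CommRing R] {f : R⟦X⟧} (hf : X * d⁄dX R f = f - f ^ 2)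
include hf

theorem X_mul_derivative_pow (m : ℕ) :
    X * d⁄dX R (f ^ m) = (m : R⟦X⟧) * (f ^ m - f ^ (m + 1)) := by
  rcases m with _ | m
  · simp
  · rw [derivative_pow, Nat.add_sub_cancel, mul_left_comm, hf]
    ring

theorem natCast_mul_coeff_pow_succ (n m : ℕ) :
    (m : R) * coeff n (f ^ (m + 1)) = ((m : R) - n) * coeff n (f ^ m) := by
  have h := congrArg (coeff n) (X_mul_derivative_pow hf m)
  rw [coeff_X_mul_derivative, ← map_natCast (C (R := R)), coeff_C_mul, map_sub] at h
  linear_combination h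

section CharP

variable {p : ℕ} [hp : Fact p.Prime] [CharP R p]

theorem coeff_pow_succ_eq_of_dvd {n m : ℕ} (hn : p ∣ n) (hm : ¬ p ∣ m) :
    coeff n (f ^ (m + 1)) = coeff n (f ^ m) := by
  have h := natCast_mul_coeff_pow_succ hf n m
  rw [(CharP.cast_eq_zero_iff R p n).mpr hn, sub_zero] at h
  exact ((CharP.isUnit_natCast_iff hp.out).mpr hm).mul_left_cancel h

theorem coeff_pow_add_one_add_of_dvd {M e : ℕ} (he : p ∣ e) :
    coeff M (f ^ (M + 1 + e)) =
      if p ∣ M then coeff (M / p) (f ^ (M / p + 1 + e / p)) ^ p else 0 := by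
  split_ifs with hM
  · obtain ⟨a, rfl⟩ := hM
    obtain ⟨c, rfl⟩ := he
    have hchain : ∀ j < p, coeff (p * a) (f ^ (p * a + 1 + p * c)) =
        coeff (p * a) (f ^ (p * (a + c) + (j + 1))) := by
      intro j hj
      induction j with
      | zero => ring_nf
      | succ j ih =>
        rw [ih (by omega), ← add_assoc (p * (a + c)) (j + 1)]
        refine (coeff_pow_succ_eq_of_dvd hf (dvd_mul_right p a) fun h => ?_).symm
        have := Nat.le_of_dvd (by omega) ((Nat.dvd_add_right (dvd_mul_right p _)).mp h)
        omega
    rw [hchain (p - 1) (Nat.sub_lt hp.out.pos one_pos), Nat.sub_add_cancel hp.out.one_le,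
      ← mul_add_one, pow_mul', coeff_pow_prime, if_pos (dvd_mul_right p a)]
    simp only [Nat.mul_div_cancel_left _ hp.out.pos, add_right_comm]
  · have h := natCast_mul_coeff_pow_succ hf M (M + e)
    rw [Nat.cast_add, add_sub_cancel_left, (CharP.cast_eq_zero_iff R p e).mpr he, zero_mul,
      add_zero] at h
    rw [add_right_comm]
    exact ((CharP.isUnit_natCast_iff hp.out).mpr hM).mul_right_eq_zero.mp h

theorem coeff_pow_add_prime_eq_neg {M : ℕ} (hM : p ∣ M + 1) :
    coeff M (f ^ (M + p)) = -coeff M (f ^ (M + 2)) := by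
  have hMR : (M : R) = -1 := by
    rw [eq_neg_iff_add_eq_zero, ← Nat.cast_one, ← Nat.cast_add, CharP.cast_eq_zero_iff R p]
    exact hM
  have hchain : ∀ j, j + 1 < p →
      coeff M (f ^ (M + 2 + j)) = ((j : R) + 1) * coeff M (f ^ (M + 2)) := by
    intro j hj
    induction j with
    | zero => simp
    | succ j ih =>
      have h := natCast_mul_coeff_pow_succ hf M (M + 2 + j)
      rw [ih (by omega)] at h
      push_cast at h ⊢
      rw [hMR] at h
      have hunit : IsUnit ((j + 1 : ℕ) : R) := (CharP.isUnit_natCast_iff hp.out).mpr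
        fun h' => by have := Nat.le_of_dvd (Nat.succ_pos j) h'; omega
      push_cast at hunit
      apply hunit.mul_left_cancel
      rw [← add_assoc]
      linear_combination h
  have h2 := hp.out.two_le
  rw [show M + p = M + 2 + (p - 2) by omega, hchain (p - 2) (by omega),
    Nat.cast_sub h2, CharP.cast_eq_zero]
  ring

end CharP

theorem coeff_pow_succ_self (p : ℕ) [hp : Fact p.Prime] [CharP R p]
    (h0 : constantCoeff f = 1) (M : ℕ) : coeff M (f ^ (M + 1)) = if M = 0 then 1 else 0 := by
  induction M using Nat.strong_induction_on with
  | _ M ih =>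
  rcases eq_or_ne M 0 with rfl | hM0
  · simp [h0]
  have h := coeff_pow_add_one_add_of_dvd hf (M := M) (dvd_zero p)
  rw [add_zero, Nat.zero_div, add_zero] at h
  rw [h, if_neg hM0]
  split_ifs with hM
  · have hpos : 0 < M / p := Nat.div_pos (Nat.le_of_dvd (Nat.pos_of_ne_zero hM0) hM) hp.out.pos
    rw [ih (M / p) (Nat.div_lt_self (Nat.pos_of_ne_zero hM0) hp.out.one_lt), if_neg hpos.ne',
      zero_pow hp.out.ne_zero]
  · rfl

theorem coeff_pow_add_two_of_not_dvd {p : ℕ} [hp : Fact p.Prime] [CharP R p]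
    (h0 : constantCoeff f = 1) {M : ℕ} (hM0 : M ≠ 0) (hM : ¬ p ∣ M + 1) :
    coeff M (f ^ (M + 2)) = 0 := by
  have h := natCast_mul_coeff_pow_succ hf M (M + 1)
  rw [coeff_pow_succ_self hf p h0, if_neg hM0, mul_zero] at h
  exact ((CharP.isUnit_natCast_iff hp.out).mpr hM).mul_right_eq_zero.mp h

end

-- Written like `xiBar`, so that `xiBar p χ = milnorSeries p fun n => χ (milnorXi p n)` is `rfl`.
noncomputable def milnorSeries {R : Type*} [CommRing R] (p : ℕ) (a : ℕ → R) : R⟦X⟧ :=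
  mk fun m => ∑ n ∈ Finset.range (m + 1), if p ^ n - 1 = m then a n else 0

section MilnorSeries

variable {R : Type*} [CommRing R] {p : ℕ} (a : ℕ → R)

theorem coeff_milnorSeries_pow_sub_one (hp : 1 < p) (n : ℕ) :
    coeff (p ^ n - 1) (milnorSeries p a) = a n := by
  rw [milnorSeries, coeff_mk, Finset.sum_eq_single_of_mem n
    (Finset.mem_range.mpr (by have := Nat.lt_pow_self (n := n) hp; omega)), if_pos rfl]
  intro k _ hkn
  rw [if_neg]
  intro h
  have h1 := Nat.one_le_pow k p (by omega)
  have h2 := Nat.one_le_pow n p (by omega)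
  exact hkn (Nat.pow_right_injective hp (by simp only; omega))

theorem coeff_milnorSeries_of_forall_ne {m : ℕ} (h : ∀ n, p ^ n - 1 ≠ m) :
    coeff m (milnorSeries p a) = 0 := by
  rw [milnorSeries, coeff_mk]
  exact Finset.sum_eq_zero fun n _ => if_neg (h n)

theorem constantCoeff_milnorSeries (hp : 1 < p) : constantCoeff (milnorSeries p a) = a 0 := by
  simpa using coeff_milnorSeries_pow_sub_one a hp 0

theorem constantCoeff_of_mul_milnorSeries_eq_one (hp : 1 < p) {w : R⟦X⟧} (ha : a 0 = 1)
    (hw : w * milnorSeries p a = 1) : constantCoeff w = 1 := by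
  have h := congrArg constantCoeff hw
  rwa [map_mul, constantCoeff_milnorSeries a hp, ha, mul_one, map_one] at h

theorem coeff_milnorSeries_eq_sum_range (hp : 1 < p) {m N : ℕ} (h : m < N) :
    coeff m (milnorSeries p a) = ∑ n ∈ Finset.range N, if p ^ n - 1 = m then a n else 0 := by
  rw [milnorSeries, coeff_mk]
  refine Finset.sum_subset (Finset.range_subset_range.mpr h) fun n _ hn => if_neg ?_
  have := Nat.lt_pow_self (n := n) hp
  simp only [Finset.mem_range] at hn
  omega

theorem coeff_mul_milnorSeries (hp : 1 < p) (f : R⟦X⟧) (M : ℕ) :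
    coeff M (f * milnorSeries p a) = ∑ n ∈ Finset.range (M + 1),
      if p ^ n ≤ M + 1 then a n * coeff (M + 1 - p ^ n) f else 0 := by
  rw [coeff_mul, Finset.Nat.sum_antidiagonal_eq_sum_range_succ
    (fun i j => coeff i f * coeff j (milnorSeries p a))]
  simp_rw [coeff_milnorSeries_eq_sum_range a hp (N := M + 1) (Nat.lt_succ_of_le (Nat.sub_le _ _)),
    Finset.mul_sum, mul_ite, mul_zero]
  rw [Finset.sum_comm]
  refine Finset.sum_congr rfl fun n _ => ?_
  have h1 := Nat.one_le_pow n p (by omega)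
  split_ifs with hn
  · rw [Finset.sum_eq_single_of_mem (M + 1 - p ^ n) (Finset.mem_range.mpr (by omega)),
      if_pos (by omega), mul_comm]
    intro k hk hkn
    simp only [Finset.mem_range] at hk
    exact if_neg (by omega)
  · exact Finset.sum_eq_zero fun k hk => if_neg (by simp only [Finset.mem_range] at hk; omega)

variable [hp : Fact p.Prime] [CharP R p]

theorem X_mul_derivative_milnorSeries :
    X * d⁄dX R (milnorSeries p a) = C (a 0) - milnorSeries p a := by
  ext m
  rw [coeff_X_mul_derivative, map_sub, coeff_C]
  by_cases h : ∃ n, p ^ n - 1 = m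
  · obtain ⟨n, rfl⟩ := h
    rw [coeff_milnorSeries_pow_sub_one a hp.out.one_lt]
    rcases n with _ | n
    · simp
    · have h1 := Nat.one_lt_pow (Nat.succ_ne_zero n) hp.out.one_lt
      rw [if_neg (Nat.sub_ne_zero_of_lt h1), Nat.cast_sub h1.le, Nat.cast_pow, CharP.cast_eq_zero,
        zero_pow (Nat.succ_ne_zero n)]
      ring
  · push Not at h
    rw [coeff_milnorSeries_of_forall_ne a h, if_neg (by simpa using (h 0).symm)]
    simp

theorem X_mul_derivative_of_mul_milnorSeries_eq_one {w : R⟦X⟧} (ha : a 0 = 1)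
    (hw : w * milnorSeries p a = 1) : X * d⁄dX R w = w - w ^ 2 := by
  have h0 := congrArg (d⁄dX R) hw
  rw [Derivation.leibniz, derivative_one, smul_eq_mul, smul_eq_mul] at h0
  have hS := X_mul_derivative_milnorSeries a
  rw [ha, map_one] at hS
  linear_combination (X * w) * h0 - w ^ 2 * hS - (X * d⁄dX R w - w) * hw

variable (b : ℕ → R)

/- `hrec` says that `Σₙ bₙ T^(pⁿ)` composed with `T v`, `v = milnorSeries p a`, is `T`; the sum
is the coefficient of `T^(M+1)` in that composite. -/
theorem sum_coeff_milnorSeries_pow_eq_zero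
    (hrec : ∀ m, 1 ≤ m → ∑ k ∈ Finset.range (m + 1), a (m - k) ^ p ^ k * b k = 0)
    {M : ℕ} (hM : 1 ≤ M) :
    ∑ n ∈ Finset.range (M + 1),
      (if p ^ n ≤ M + 1 then b n * coeff (M + 1 - p ^ n) (milnorSeries p a ^ p ^ n) else 0) =
      0 := by
  have hp1 := hp.out.one_lt
  by_cases hpow : ∃ m, M + 1 = p ^ m
  · obtain ⟨m, hm⟩ := hpow
    have hm1 : 1 ≤ m := Nat.one_le_iff_ne_zero.mpr (by rintro rfl; rw [pow_zero] at hm; omega)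
    have hsub : Finset.range (m + 1) ⊆ Finset.range (M + 1) :=
      Finset.range_subset_range.mpr (by have := Nat.lt_pow_self (n := m) hp1; omega)
    refine (Finset.sum_subset hsub fun n _ hn => ?_).symm.trans
      ((Finset.sum_congr rfl fun n hn => ?_).trans (hrec m hm1))
    · rw [Finset.mem_range, not_lt] at hn
      rw [if_neg (by rw [hm, not_le]; exact Nat.pow_lt_pow_right hp1 hn)]
    · have hnm : n ≤ m := Nat.lt_succ_iff.mp (Finset.mem_range.mp hn)
      have hq : M + 1 - p ^ n = p ^ n * (p ^ (m - n) - 1) := by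
        rw [Nat.mul_sub_one, ← pow_add, Nat.add_sub_cancel' hnm, hm]
      rw [if_pos (hm ▸ Nat.pow_le_pow_right hp.out.pos hnm), hq, coeff_pow_prime_pow,
        if_pos (dvd_mul_right _ _), Nat.mul_div_cancel_left _ (pow_pos hp.out.pos n),
        coeff_milnorSeries_pow_sub_one a hp1, mul_comm]
  · push Not at hpow
    refine Finset.sum_eq_zero fun n _ => ?_
    split_ifs with hn
    · rw [coeff_pow_prime_pow]
      split_ifs with hdvd
      · obtain ⟨q, hq⟩ := hdvd
        rw [coeff_milnorSeries_of_forall_ne, zero_pow, mul_zero]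
        · positivity
        intro s hs
        rw [hq, Nat.mul_div_cancel_left _ (pow_pos hp.out.pos n)] at hs
        have := Nat.one_le_pow s p hp.out.pos
        apply hpow (n + s)
        rw [pow_add, ← Nat.sub_add_cancel this, hs, mul_add_one]
        omega
      · rw [mul_zero]
    · rfl

variable {a b} {w : R⟦X⟧} (ha : a 0 = 1) (hb : b 0 = 1)
  (hrec : ∀ m, 1 ≤ m → ∑ k ∈ Finset.range (m + 1), a (m - k) ^ p ^ k * b k = 0)
  (hw : w * milnorSeries p b = 1)
include hw

theorem coeff_pow_add_prime_eq_sum {M Q : ℕ} (hQ : M + 1 = p * Q)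
    (ih : ∀ M' < M, ∀ c, coeff M' (w ^ (M' + 1 + p ^ c)) = coeff M' (milnorSeries p a ^ p ^ c)) :
    coeff M (w ^ (M + p)) = ∑ n ∈ Finset.range M, if p ^ (n + 1) ≤ M + 1 then
      b (n + 1) * coeff (M + 1 - p ^ (n + 1)) (milnorSeries p a ^ p ^ (n + 1)) else 0 := by
  have hQM : 2 * Q ≤ M + 1 := hQ ▸ Nat.mul_le_mul_right Q hp.out.two_le
  have hMp : ¬ p ∣ M := fun h =>
    hp.out.one_lt.ne' (Nat.dvd_one.mp ((Nat.dvd_add_right h).mp ⟨Q, hQ⟩))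
  have hpow : w ^ (M + p) = (w ^ (Q + 1)) ^ p * milnorSeries p b := by
    rw [← pow_mul', mul_add_one, ← hQ, ← mul_one (w ^ (M + p)), ← hw, ← mul_assoc, ← pow_succ]
    ring_nf
  rw [hpow, coeff_mul_milnorSeries b hp.out.one_lt, Finset.sum_range_succ', pow_zero,
    Nat.add_sub_cancel, coeff_pow_prime, if_neg hMp, mul_zero, ite_self, add_zero]
  refine Finset.sum_congr rfl fun n _ => ?_
  split_ifs with hn
  · have h1 := Nat.one_le_pow n p hp.out.pos
    have hnQ : p ^ n ≤ Q :=
      Nat.le_of_mul_le_mul_left (by rw [← pow_succ', ← hQ]; exact hn) hp.out.pos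
    have hK : M + 1 - p ^ (n + 1) = p * (Q - p ^ n) := by rw [hQ, pow_succ', Nat.mul_sub]
    rw [hK, pow_succ p n, pow_mul, coeff_pow_prime (p := p), coeff_pow_prime (p := p),
      if_pos (dvd_mul_right _ _), Nat.mul_div_cancel_left _ hp.out.pos,
      ← ih (Q - p ^ n) (by omega) n, if_pos (dvd_mul_right _ _),
      show Q - p ^ n + 1 + p ^ n = Q + 1 by omega]
  · rfl

include ha hb hrec

theorem coeff_pow_add_two_eq_coeff_milnorSeries {M : ℕ}
    (ih : ∀ M' < M, ∀ c, coeff M' (w ^ (M' + 1 + p ^ c)) = coeff M' (milnorSeries p a ^ p ^ c)) :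
    coeff M (w ^ (M + 2)) = coeff M (milnorSeries p a) := by
  have hp1 := hp.out.one_lt
  have hf := X_mul_derivative_of_mul_milnorSeries_eq_one b hb hw
  have h0 := constantCoeff_of_mul_milnorSeries_eq_one b hp1 hb hw
  rcases eq_or_ne M 0 with rfl | hM0
  · simp [h0, constantCoeff_milnorSeries a hp1, ha]
  by_cases hM : p ∣ M + 1
  · obtain ⟨Q, hQ⟩ := hM
    have hlast := coeff_pow_add_prime_eq_neg hf ⟨Q, hQ⟩
    have hrel := sum_coeff_milnorSeries_pow_eq_zero a b hrec (Nat.pos_of_ne_zero hM0)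
    rw [coeff_pow_add_prime_eq_sum hw hQ ih] at hlast
    rw [Finset.sum_range_succ', pow_zero, pow_one, if_pos (Nat.le_add_left 1 M),
      Nat.add_sub_cancel, hb, one_mul] at hrel
    linear_combination hlast - hrel
  · rw [coeff_pow_add_two_of_not_dvd hf h0 hM0 hM, coeff_milnorSeries_of_forall_ne]
    rintro (_ | n) hn
    · exact hM0 (by simpa using hn.symm)
    · exact hM ⟨p ^ n, by rw [← hn, Nat.sub_add_cancel (Nat.one_le_pow _ _ hp.out.pos), pow_succ']⟩

theorem coeff_pow_eq_coeff_milnorSeries_pow (c M : ℕ) :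
    coeff M (w ^ (M + 1 + p ^ c)) = coeff M (milnorSeries p a ^ p ^ c) := by
  induction M using Nat.strong_induction_on generalizing c with
  | _ M ih =>
  rcases c with _ | c
  · rw [pow_zero, pow_one]
    exact coeff_pow_add_two_eq_coeff_milnorSeries ha hb hrec hw ih
  rcases eq_or_ne M 0 with rfl | hM0
  · simp [constantCoeff_of_mul_milnorSeries_eq_one b hp.out.one_lt hb hw,
      constantCoeff_milnorSeries a hp.out.one_lt, ha]
  rw [coeff_pow_add_one_add_of_dvd (X_mul_derivative_of_mul_milnorSeries_eq_one b hb hw)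
    (dvd_pow_self p c.succ_ne_zero), pow_succ, Nat.mul_div_cancel _ hp.out.pos, pow_mul,
    coeff_pow_prime (p := p)]
  split_ifs
  · rw [ih (M / p) (Nat.div_lt_self (Nat.pos_of_ne_zero hM0) hp.out.one_lt)]
  · rfl

end MilnorSeries

theorem antipode_map_one {k A : Type*} [CommRing k] [CommRing A] [Algebra k A]
    {Δ : A →ₐ[k] A ⊗[k] A} {ε : A →ₐ[k] k} {χ : A →ₗ[k] A}
    (h : LinearMap.mul' k A (TensorProduct.map χ LinearMap.id (Δ 1)) = algebraMap k A (ε 1)) :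
    χ 1 = 1 := by
  rwa [map_one Δ, Algebra.TensorProduct.one_def, TensorProduct.map_tmul, LinearMap.mul'_apply,
    LinearMap.id_apply, mul_one, map_one ε, (algebraMap k A).map_one] at h

theorem sum_milnorXi_pow_mul_antipode {p : ℕ}
    {Δ : MvPolynomial ℕ (ZMod p) →ₐ[ZMod p]
      (MvPolynomial ℕ (ZMod p) ⊗[ZMod p] MvPolynomial ℕ (ZMod p))}
    {ε : MvPolynomial ℕ (ZMod p) →ₐ[ZMod p] ZMod p}
    {χ : MvPolynomial ℕ (ZMod p) →ₗ[ZMod p] MvPolynomial ℕ (ZMod p)}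
    (hΔ : ∀ n : ℕ, 1 ≤ n → Δ (milnorXi p n) = milnorCoprodVal p n)
    (hε : ∀ n : ℕ, 1 ≤ n → ε (milnorXi p n) = 0)
    (hχ : ∀ x, LinearMap.mul' (ZMod p) (MvPolynomial ℕ (ZMod p))
      (TensorProduct.map LinearMap.id χ (Δ x)) = algebraMap (ZMod p) _ (ε x))
    {m : ℕ} (hm : 1 ≤ m) :
    ∑ k ∈ Finset.range (m + 1), milnorXi p (m - k) ^ p ^ k * χ (milnorXi p k) = 0 := by
  have h := hχ (milnorXi p m)
  rw [hΔ m hm, hε m hm, map_zero, milnorCoprodVal, map_sum, map_sum] at h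
  simpa only [TensorProduct.map_tmul, LinearMap.mul'_apply, LinearMap.id_apply] using h

theorem stmt_3_general (p : ℕ) [Fact p.Prime]
    (Δ : MvPolynomial ℕ (ZMod p) →ₐ[ZMod p]
      (MvPolynomial ℕ (ZMod p) ⊗[ZMod p] MvPolynomial ℕ (ZMod p)))
    (hΔ : ∀ n : ℕ, 1 ≤ n → Δ (milnorXi p n) = milnorCoprodVal p n)
    (ε : MvPolynomial ℕ (ZMod p) →ₐ[ZMod p] ZMod p)
    (hε : ∀ n : ℕ, 1 ≤ n → ε (milnorXi p n) = 0)
    (χ : MvPolynomial ℕ (ZMod p) →ₗ[ZMod p] MvPolynomial ℕ (ZMod p))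
    (hχ : ∀ x : MvPolynomial ℕ (ZMod p),
      (LinearMap.mul' (ZMod p) (MvPolynomial ℕ (ZMod p)))
          ((TensorProduct.map χ LinearMap.id) (Δ x)) =
        algebraMap (ZMod p) (MvPolynomial ℕ (ZMod p)) (ε x) ∧
      (LinearMap.mul' (ZMod p) (MvPolynomial ℕ (ZMod p)))
          ((TensorProduct.map LinearMap.id χ) (Δ x)) =
        algebraMap (ZMod p) (MvPolynomial ℕ (ZMod p)) (ε x))
    (u : (PowerSeries (MvPolynomial ℕ (ZMod p)))ˣ)
    (hu : (u : PowerSeries (MvPolynomial ℕ (ZMod p))) = xiBar p χ)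
    (t i : ℕ) (hi1 : 1 ≤ i) (hi2 : i ≤ p ^ t - 1) :
    (∀ s : ℕ, s < t → i = p ^ t - p ^ s →
      PowerSeries.coeff (R := MvPolynomial ℕ (ZMod p)) (p ^ t - i - 1)
          ((u ^ ((i : ℤ) - 1) : (PowerSeries (MvPolynomial ℕ (ZMod p)))ˣ) :
            PowerSeries (MvPolynomial ℕ (ZMod p))) =
        milnorXi p s) ∧
    ((∀ s : ℕ, s < t → i ≠ p ^ t - p ^ s) →
      PowerSeries.coeff (R := MvPolynomial ℕ (ZMod p)) (p ^ t - i - 1)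
          ((u ^ ((i : ℤ) - 1) : (PowerSeries (MvPolynomial ℕ (ZMod p)))ˣ) :
            PowerSeries (MvPolynomial ℕ (ZMod p))) =
        0) := by
  have hp := (Fact.out : p.Prime)
  have hξ0 : milnorXi p 0 = 1 := if_pos rfl
  have hb0 : χ (milnorXi p 0) = 1 := hξ0 ▸ antipode_map_one (hχ 1).1
  have hxiBar : xiBar p χ = milnorSeries p fun n => χ (milnorXi p n) := rfl
  have hw : ↑u⁻¹ * milnorSeries p (fun n => χ (milnorXi p n)) = 1 := by
    rw [← hxiBar, ← hu, Units.inv_mul]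
  have hu0 : PowerSeries.constantCoeff (u : PowerSeries (MvPolynomial ℕ (ZMod p))) = 1 := by
    rw [hu, hxiBar, constantCoeff_milnorSeries _ hp.one_lt, hb0]
  set N := p ^ t - i - 1 with hN
  have hcoeff : PowerSeries.coeff N
      ((u ^ ((i : ℤ) - 1) : (PowerSeries (MvPolynomial ℕ (ZMod p)))ˣ) :
        PowerSeries (MvPolynomial ℕ (ZMod p))) =
      PowerSeries.coeff N (milnorSeries p (milnorXi p)) := by
    rw [show (i : ℤ) - 1 = ((p ^ t : ℕ) : ℤ) - ((N + 1 + 1 : ℕ) : ℤ) by omega,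
      coeff_zpow_sub_eq_coeff_inv_pow hu0 (by omega)]
    simpa using coeff_pow_eq_coeff_milnorSeries_pow hξ0 hb0
      (fun m hm => sum_milnorXi_pow_mul_antipode hΔ hε (fun x => (hχ x).2) hm) hw 0 N
  refine ⟨fun s _ hs => ?_, fun hne => ?_⟩
  · rw [hcoeff, show N = p ^ s - 1 by omega, coeff_milnorSeries_pow_sub_one _ hp.one_lt]
  · rw [hcoeff, coeff_milnorSeries_of_forall_ne]
    intro n hn
    have := Nat.one_le_pow n p hp.pos
    exact hne n ((Nat.pow_lt_pow_iff_right hp.one_lt).mp (by omega)) (by omega)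

/-- For an odd prime `p`, all `t ≥ 1` and all `1 ≤ i ≤ p^t − 1`, the
degree-`2(p^t − i − 1)` homogeneous component of `ξ̄^{i−1} ∈ B̂` equals `ξ_s` if
`i = p^t − p^s` for some `0 ≤ s ≤ t − 1` (with `ξ_0 = 1`), and equals `0` otherwise.
Here `Δ`, `ε` are the coproduct and counit of `B`, `χ` is its antipode, and `u` is `ξ̄`
regarded as a unit of `B̂`. -/
theorem stmt_3 (p : ℕ) [Fact p.Prime] (hodd : Odd p)
    (Δ : MvPolynomial ℕ (ZMod p) →ₐ[ZMod p]
      (MvPolynomial ℕ (ZMod p) ⊗[ZMod p] MvPolynomial ℕ (ZMod p)))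
    (hΔ : ∀ n : ℕ, 1 ≤ n → Δ (milnorXi p n) = milnorCoprodVal p n)
    (ε : MvPolynomial ℕ (ZMod p) →ₐ[ZMod p] ZMod p)
    (hε : ∀ n : ℕ, 1 ≤ n → ε (milnorXi p n) = 0)
    (χ : MvPolynomial ℕ (ZMod p) →ₗ[ZMod p] MvPolynomial ℕ (ZMod p))
    (hχ : ∀ x : MvPolynomial ℕ (ZMod p),
      (LinearMap.mul' (ZMod p) (MvPolynomial ℕ (ZMod p)))
          ((TensorProduct.map χ LinearMap.id) (Δ x)) =
        algebraMap (ZMod p) (MvPolynomial ℕ (ZMod p)) (ε x) ∧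
      (LinearMap.mul' (ZMod p) (MvPolynomial ℕ (ZMod p)))
          ((TensorProduct.map LinearMap.id χ) (Δ x)) =
        algebraMap (ZMod p) (MvPolynomial ℕ (ZMod p)) (ε x))
    (u : (PowerSeries (MvPolynomial ℕ (ZMod p)))ˣ)
    (hu : (u : PowerSeries (MvPolynomial ℕ (ZMod p))) = xiBar p χ)
    (t i : ℕ) (ht : 1 ≤ t) (hi1 : 1 ≤ i) (hi2 : i ≤ p ^ t - 1) :
    (∀ s : ℕ, s < t → i = p ^ t - p ^ s →
      PowerSeries.coeff (R := MvPolynomial ℕ (ZMod p)) (p ^ t - i - 1)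
          ((u ^ ((i : ℤ) - 1) : (PowerSeries (MvPolynomial ℕ (ZMod p)))ˣ) :
            PowerSeries (MvPolynomial ℕ (ZMod p))) =
        milnorXi p s) ∧
    ((∀ s : ℕ, s < t → i ≠ p ^ t - p ^ s) →
      PowerSeries.coeff (R := MvPolynomial ℕ (ZMod p)) (p ^ t - i - 1)
          ((u ^ ((i : ℤ) - 1) : (PowerSeries (MvPolynomial ℕ (ZMod p)))ˣ) :
            PowerSeries (MvPolynomial ℕ (ZMod p))) =
        0) :=
  stmt_3_general p Δ hΔ ε hε χ hχ u hu t i hi1 hi2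
end
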